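/- Let P be a subset of the Euclidean plane, let s, t ∈ P, and let γ : [0,1] → E be a continuous path with range γ ⊆ P, γ 0 = s, γ 1 = t, whose length eVariationOn γ Set.univ is finite and equal to the geodesic distance d_P(s, t) (i.e., γ is a shortest path from s to t in P). If 0 ≤ t₁ ≤ t₂ ≤ 1 are parameters such that the points y = γ t₁ and y' = γ t₂ are mutually visible, i.e., segment ℝ y y' ⊆ P, then the portion of γ between t₁ and t₂ is a straight segment: eVariationOn γ (Set.Icc t₁ t₂) = edist y y', and segment ℝ y y' ⊆ Set.range γ. -/

import Mathlib

open scoped ENNReal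

noncomputable abbrev E2 : Type := EuclideanSpace ℝ (Fin 2)

/-- The geodesic (intrinsic) distance in `P`: the infimum of path lengths
(`eVariationOn γ Set.univ`) over continuous paths `γ : [0,1] → E` staying in `P`
from `x` to `y`; `∞` if no such finite-length path exists. -/
noncomputable def geoDist (P : Set E2) (x y : E2) : ℝ≥0∞ :=
  sInf { l : ℝ≥0∞ | ∃ γ : Set.Icc (0:ℝ) 1 → E2,
    Continuous γ ∧ Set.range γ ⊆ P ∧
    γ ⟨0, by norm_num⟩ = x ∧ γ ⟨1, by norm_num⟩ = y ∧
    eVariationOn γ Set.univ = l }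

/-!
Splicing the segment `[γ t₁, γ t₂]` into `γ` in place of its portion over `[t₁, t₂]` gives a
competitor path in `P`; minimality of `γ` and finiteness of its length force that portion to have
length exactly `|γ t₁ - γ t₂|`. Every point of the portion then satisfies the triangle inequality
with equality, i.e. lies on the segment, and since the portion is connected and contains both
endpoints, it is the whole segment.
-/

open Set AffineMap

section Variation

variable {α E : Type*} [LinearOrder α] [PseudoEMetricSpace E]

lemma eVariationOn_univ_eq_add_add [BoundedOrder α] (f : α → E) {a b : α} (hab : a ≤ b) :
    eVariationOn f univ =
      eVariationOn f (Icc ⊥ a) + eVariationOn f (Icc a b) + eVariationOn f (Icc b ⊤) := by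
  have hleft := eVariationOn.Icc_add_Icc f bot_le hab (mem_univ a)
  have hright := eVariationOn.Icc_add_Icc f (bot_le.trans hab) le_top (mem_univ b)
  simp only [univ_inter, Icc_bot_top] at hleft hright
  rw [← hright, ← hleft]

lemma edist_add_edist_le_eVariationOn (f : α → E) {a b u : α} (hu : u ∈ Icc a b) :
    edist (f a) (f u) + edist (f u) (f b) ≤ eVariationOn f (Icc a b) := by
  have hsplit := eVariationOn.Icc_add_Icc f (s := univ) hu.1 hu.2 (mem_univ u)
  simp only [univ_inter] at hsplit
  rw [← hsplit]
  gcongr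
  · exact eVariationOn.edist_le f (left_mem_Icc.2 hu.1) (right_mem_Icc.2 hu.1)
  · exact eVariationOn.edist_le f (left_mem_Icc.2 hu.2) (right_mem_Icc.2 hu.2)

lemma dist_add_dist_eq_of_eVariationOn_eq {E : Type*} [PseudoMetricSpace E] {f : α → E}
    {a b u : α} (h : eVariationOn f (Icc a b) = edist (f a) (f b)) (hu : u ∈ Icc a b) :
    dist (f a) (f u) + dist (f u) (f b) = dist (f a) (f b) := by
  refine le_antisymm ?_ (dist_triangle _ _ _)
  have hle := h ▸ edist_add_edist_le_eVariationOn f hu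
  rwa [edist_dist, edist_dist, edist_dist, ← ENNReal.ofReal_add dist_nonneg dist_nonneg,
    ENNReal.ofReal_le_ofReal_iff dist_nonneg] at hle

end Variation

section Segment

variable {E : Type*} [NormedAddCommGroup E] [NormedSpace ℝ E]

lemma eVariationOn_lineMap_le (x y : E) :
    eVariationOn (lineMap x y : ℝ → E) (Icc 0 1) ≤ edist x y := by
  calc eVariationOn (lineMap x y ∘ id : ℝ → E) (Icc 0 1)
      ≤ nndist x y * eVariationOn (id : ℝ → ℝ) (Icc 0 1) :=
        (lipschitzWith_lineMap x y).lipschitzOnWith.comp_eVariationOn_le (mapsTo_univ _ _)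
    _ = edist x y := by rw [eVariationOn_id_Icc, sub_zero, ENNReal.ofReal_one, mul_one, edist_nndist]

lemma segment_subset_of_isPreconnected [StrictConvexSpace ℝ E] {K : Set E} {x y : E}
    (hK : IsPreconnected K) (hx : x ∈ K) (hy : y ∈ K)
    (hbtw : ∀ z ∈ K, dist x z + dist z y = dist x y) : segment ℝ x y ⊆ K := by
  rw [segment_eq_image_lineMap]
  rintro _ ⟨θ, hθ, rfl⟩
  have hval : θ * dist x y ∈ Icc (dist x x) (dist x y) := by
    rw [dist_self]
    exact ⟨mul_nonneg hθ.1 dist_nonneg, mul_le_of_le_one_left dist_nonneg hθ.2⟩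
  obtain ⟨w, hwK, hw⟩ := hK.intermediate_value (f := dist x) hx hy (by fun_prop) hval
  have hwy : dist w y = (1 - θ) * dist x y := by linarith [hbtw w hwK]
  rwa [← eq_lineMap_of_dist_eq_mul_of_dist_eq_mul hw hwy]

noncomputable def spliceSegment (γ : Icc (0:ℝ) 1 → E) (t₁ t₂ : Icc (0:ℝ) 1) :
    Icc (0:ℝ) 1 → E := fun u =>
  if u ≤ t₁ then γ u
  else if u ≤ t₂ then lineMap (γ t₁) (γ t₂) (((u : ℝ) - t₁) / (t₂ - t₁))
  else γ u

variable (γ : Icc (0:ℝ) 1 → E) (t₁ t₂ : Icc (0:ℝ) 1)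

lemma lineMap_div_self : lineMap (γ t₁) (γ t₂) (((t₂ : ℝ) - t₁) / (t₂ - t₁)) = γ t₂ := by
  rcases eq_or_ne t₁ t₂ with rfl | hne
  · simp
  · rw [div_self (sub_ne_zero.2 (Subtype.coe_injective.ne hne.symm)), lineMap_apply_one]

lemma spliceSegment_of_le {u : Icc (0:ℝ) 1} (hu : u ≤ t₁) : spliceSegment γ t₁ t₂ u = γ u :=
  if_pos hu

lemma spliceSegment_of_ge {u : Icc (0:ℝ) 1} (hu : t₂ ≤ u) : spliceSegment γ t₁ t₂ u = γ u := by
  unfold spliceSegment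
  split_ifs with h₁ h₂
  · rfl
  · rw [le_antisymm h₂ hu, lineMap_div_self]
  · rfl

lemma spliceSegment_of_mem_Icc {u : Icc (0:ℝ) 1} (hu : u ∈ Icc t₁ t₂) :
    spliceSegment γ t₁ t₂ u = lineMap (γ t₁) (γ t₂) (((u : ℝ) - t₁) / (t₂ - t₁)) := by
  unfold spliceSegment
  split_ifs with h₁ h₂
  · rw [le_antisymm h₁ hu.1, sub_self, zero_div, lineMap_apply_zero]
  · rfl
  · exact absurd hu.2 h₂

lemma continuous_spliceSegment (hγ : Continuous γ) : Continuous (spliceSegment γ t₁ t₂) := by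
  have hmid : Continuous fun u : Icc (0:ℝ) 1 =>
      if u ≤ t₂ then lineMap (γ t₁) (γ t₂) (((u : ℝ) - t₁) / (t₂ - t₁)) else γ u :=
    Continuous.if_le (lineMap_continuous.comp (by fun_prop)) hγ continuous_id continuous_const
      fun u hu => by rw [hu, lineMap_div_self]
  refine Continuous.if_le hγ hmid continuous_id continuous_const fun u hu => ?_
  rw [hu]
  split_ifs <;> simp

lemma range_spliceSegment_subset :
    range (spliceSegment γ t₁ t₂) ⊆ range γ ∪ segment ℝ (γ t₁) (γ t₂) := by
  rintro _ ⟨u, rfl⟩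
  unfold spliceSegment
  split_ifs with h₁ h₂
  · exact Or.inl (mem_range_self u)
  · have h₁' : (t₁ : ℝ) < u := not_le.1 h₁
    have h₂' : (u : ℝ) ≤ t₂ := h₂
    rw [segment_eq_image_lineMap]
    refine Or.inr ⟨_, ⟨?_, ?_⟩, rfl⟩
    · exact div_nonneg (by linarith) (by linarith)
    · exact div_le_one_of_le₀ (by linarith) (by linarith)
  · exact Or.inl (mem_range_self u)

lemma eVariationOn_spliceSegment_Icc_le :
    eVariationOn (spliceSegment γ t₁ t₂) (Icc t₁ t₂) ≤ edist (γ t₁) (γ t₂) := by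
  set φ : Icc (0:ℝ) 1 → ℝ := fun u => ((u : ℝ) - t₁) / (t₂ - t₁)
  have hφ : MonotoneOn φ (Icc t₁ t₂) := fun a ha b _ hab =>
    div_le_div_of_nonneg_right (sub_le_sub_right (Subtype.coe_le_coe.2 hab) _)
      (sub_nonneg.2 (Subtype.coe_le_coe.2 (ha.1.trans ha.2)))
  have hφ01 : φ '' Icc t₁ t₂ ⊆ Icc 0 1 := by
    rintro _ ⟨u, hu, rfl⟩
    have h₁ : (t₁ : ℝ) ≤ u := hu.1
    have h₂ : (u : ℝ) ≤ t₂ := hu.2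
    exact ⟨div_nonneg (by linarith) (by linarith), div_le_one_of_le₀ (by linarith) (by linarith)⟩
  rw [eVariationOn.eq_of_eqOn fun u hu => spliceSegment_of_mem_Icc γ t₁ t₂ hu]
  calc eVariationOn (lineMap (γ t₁) (γ t₂) ∘ φ) (Icc t₁ t₂)
      = eVariationOn (lineMap (γ t₁) (γ t₂) : ℝ → E) (φ '' Icc t₁ t₂) :=
        eVariationOn.comp_eq_of_monotoneOn _ φ hφ
    _ ≤ edist (γ t₁) (γ t₂) := (eVariationOn.mono _ hφ01).trans (eVariationOn_lineMap_le _ _)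

lemma eVariationOn_spliceSegment_le (h12 : t₁ ≤ t₂) :
    eVariationOn (spliceSegment γ t₁ t₂) univ ≤
      eVariationOn γ (Icc ⊥ t₁) + edist (γ t₁) (γ t₂) + eVariationOn γ (Icc t₂ ⊤) := by
  have hleft : eVariationOn (spliceSegment γ t₁ t₂) (Icc ⊥ t₁) = eVariationOn γ (Icc ⊥ t₁) :=
    eVariationOn.eq_of_eqOn fun _ hu => spliceSegment_of_le γ t₁ t₂ hu.2
  have hright : eVariationOn (spliceSegment γ t₁ t₂) (Icc t₂ ⊤) = eVariationOn γ (Icc t₂ ⊤) :=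
    eVariationOn.eq_of_eqOn fun _ hu => spliceSegment_of_ge γ t₁ t₂ hu.1
  rw [eVariationOn_univ_eq_add_add _ h12, hleft, hright]
  gcongr
  exact eVariationOn_spliceSegment_Icc_le γ t₁ t₂

end Segment

lemma geoDist_le_eVariationOn {P : Set E2} {γ : Icc (0:ℝ) 1 → E2} (hγ : Continuous γ)
    (hran : range γ ⊆ P) :
    geoDist P (γ ⟨0, by norm_num⟩) (γ ⟨1, by norm_num⟩) ≤ eVariationOn γ univ :=
  sInf_le ⟨γ, hγ, hran, rfl, rfl, rfl⟩

lemma eVariationOn_Icc_eq_edist_of_eq_geoDist {P : Set E2} {γ : Icc (0:ℝ) 1 → E2}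
    (hγ : Continuous γ) (hran : range γ ⊆ P) (hfin : eVariationOn γ univ < ⊤)
    (hshortest : eVariationOn γ univ = geoDist P (γ ⟨0, by norm_num⟩) (γ ⟨1, by norm_num⟩))
    {t₁ t₂ : Icc (0:ℝ) 1} (h12 : t₁ ≤ t₂) (hvis : segment ℝ (γ t₁) (γ t₂) ⊆ P) :
    eVariationOn γ (Icc t₁ t₂) = edist (γ t₁) (γ t₂) := by
  refine le_antisymm ?_ (eVariationOn.edist_le γ (left_mem_Icc.2 h12) (right_mem_Icc.2 h12))
  have hsplice_ran : range (spliceSegment γ t₁ t₂) ⊆ P :=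
    (range_spliceSegment_subset γ t₁ t₂).trans (union_subset hran hvis)
  have hsplice_ends : spliceSegment γ t₁ t₂ ⟨0, by norm_num⟩ = γ ⟨0, by norm_num⟩ ∧
      spliceSegment γ t₁ t₂ ⟨1, by norm_num⟩ = γ ⟨1, by norm_num⟩ :=
    ⟨spliceSegment_of_le γ t₁ t₂ t₁.2.1, spliceSegment_of_ge γ t₁ t₂ t₂.2.2⟩
  have hshorter : eVariationOn γ univ ≤ eVariationOn (spliceSegment γ t₁ t₂) univ := by
    rw [hshortest, ← hsplice_ends.1, ← hsplice_ends.2]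
    exact geoDist_le_eVariationOn (continuous_spliceSegment γ t₁ t₂ hγ) hsplice_ran
  have hsum := hshorter.trans (eVariationOn_spliceSegment_le γ t₁ t₂ h12)
  rw [eVariationOn_univ_eq_add_add γ h12] at hfin hsum
  simp only [ENNReal.add_lt_top] at hfin
  obtain ⟨⟨hleft, -⟩, hright⟩ := hfin
  exact (ENNReal.add_le_add_iff_left hleft.ne).1 ((ENNReal.add_le_add_iff_right hright.ne).1 hsum)

/-- If `γ` is a shortest path in `P` from `s` to `t` and two of its points
`γ t₁`, `γ t₂` are mutually visible in `P`, then the portion of `γ` between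
`t₁` and `t₂` is the straight segment joining them: its length equals the
Euclidean (extended) distance and the segment is contained in the range of `γ`. -/
theorem shortest_path_contains_visible_segment (P : Set E2) (s t : E2)
    (γ : Set.Icc (0:ℝ) 1 → E2) (hγ : Continuous γ) (hran : Set.range γ ⊆ P)
    (h0 : γ ⟨0, by norm_num⟩ = s) (h1 : γ ⟨1, by norm_num⟩ = t)
    (hfin : eVariationOn γ Set.univ < ⊤)
    (hshortest : eVariationOn γ Set.univ = geoDist P s t)
    (t₁ t₂ : Set.Icc (0:ℝ) 1) (h12 : t₁ ≤ t₂)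
    (hvis : segment ℝ (γ t₁) (γ t₂) ⊆ P) :
    eVariationOn γ (Set.Icc t₁ t₂) = edist (γ t₁) (γ t₂) ∧
      segment ℝ (γ t₁) (γ t₂) ⊆ Set.range γ := by
  subst h0 h1
  have hlength := eVariationOn_Icc_eq_edist_of_eq_geoDist hγ hran hfin hshortest h12 hvis
  refine ⟨hlength, ?_⟩
  have hsub : segment ℝ (γ t₁) (γ t₂) ⊆ γ '' Icc t₁ t₂ :=
    segment_subset_of_isPreconnected (isPreconnected_Icc.image γ hγ.continuousOn)
      (mem_image_of_mem γ (left_mem_Icc.2 h12)) (mem_image_of_mem γ (right_mem_Icc.2 h12))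
      (by rintro _ ⟨u, hu, rfl⟩; exact dist_add_dist_eq_of_eVariationOn_eq hlength hu)
  exact hsub.trans (image_subset_range γ _)
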